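/- There exists λ > 0 and μ = ln 3 such that ln 3·N₁(t,s) + ln 2·N₂(t,s) - (1-λ)(t-s) ≤ μ for all real t ≥ s ≥ 0, where N₁(t,s) counts odd positive integers in (s,t] and N₂(t,s) counts even positive integers in (s,t]. -/

import Mathlib

/-!
Between `s` and `t` there are at most `t - s + 1` integers, and odd and even ones alternate, so
`N₁ ≤ N₂ + 1`. Splitting `ln 3 · N₁ + ln 2 · N₂` into its symmetric part `(ln 6 / 2)(N₁ + N₂)` and
its antisymmetric part `(ln (3/2) / 2)(N₁ - N₂)` bounds it by `(ln 6 / 2)(t - s) + ln 3`, and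
`ln 6 < 2` leaves room for `λ = 1 - ln 6 / 2 > 0`.
-/

open Set

section
open Finset

theorem Nat.card_filter_even_Ioc (a b : ℕ) : #{n ∈ Ioc a b | Even n} = b / 2 - a / 2 := by
  rcases le_total a b with hab | hba
  · have hsplit := congrArg (fun s => #{n ∈ s | 2 ∣ n}) (Ioc_union_Ioc_eq_Ioc (zero_le a) hab)
    simp only [filter_union, card_union_of_disjoint
      (disjoint_filter_filter (Ioc_disjoint_Ioc_of_le le_rfl)),
      Ioc_filter_dvd_card_eq_div] at hsplit
    simp only [even_iff_two_dvd]
    omega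
  · rw [Finset.Ioc_eq_empty_of_le hba, filter_empty, Finset.card_empty]
    have := Nat.div_le_div_right (c := 2) hba
    omega

theorem Nat.card_filter_odd_add_card_filter_even_Ioc (a b : ℕ) :
    #{n ∈ Ioc a b | Odd n} + #{n ∈ Ioc a b | Even n} = b - a := by
  simpa only [Nat.not_odd_iff_even, Nat.card_Ioc] using
    card_filter_add_card_filter_not (s := Ioc a b) (p := (Odd ·))

theorem Nat.card_filter_odd_Ioc_le (a b : ℕ) :
    #{n ∈ Ioc a b | Odd n} ≤ #{n ∈ Ioc a b | Even n} + 1 := by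
  have htotal := card_filter_odd_add_card_filter_even_Ioc a b
  rw [card_filter_even_Ioc] at htotal ⊢
  omega

variable {R : Type*} [CommRing R] [LinearOrder R] [IsStrictOrderedRing R] [FloorSemiring R]

theorem ncard_setOf_natCast_mem_Ioc (p : ℕ → Prop) [DecidablePred p] {s t : R}
    (hs : 0 ≤ s) (ht : 0 ≤ t) :
    {n : ℕ | 0 < n ∧ p n ∧ (n : R) ∈ Set.Ioc s t}.ncard = #{n ∈ Ioc ⌊s⌋₊ ⌊t⌋₊ | p n} := by
  rw [← Set.ncard_coe_finset]
  congr 1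
  ext n
  simp only [Set.mem_ofPred_eq, coe_filter, Finset.mem_Ioc, Set.mem_Ioc, Nat.floor_lt hs,
    Nat.le_floor_iff ht]
  constructor
  · exact fun ⟨_, hp, hn⟩ => ⟨hn, hp⟩
  · exact fun ⟨hn, hp⟩ => ⟨Nat.cast_pos.1 (hs.trans_lt hn.1), hp, hn⟩

theorem Nat.cast_floor_sub_floor_le {s t : R} (hs : 0 ≤ s) (hst : s ≤ t) :
    ((⌊t⌋₊ - ⌊s⌋₊ : ℕ) : R) ≤ t - s + 1 := by
  rw [Nat.cast_sub (Nat.floor_le_floor hst)]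
  linarith [Nat.floor_le (hs.trans hst), Nat.lt_floor_add_one s]

end

theorem weighted_sum_le_of_le_add_one {α β x y d : ℝ} (hβα : β ≤ α) (hαβ : 0 ≤ α + β)
    (hxy : x ≤ y + 1) (hsum : x + y ≤ d + 1) : α * x + β * y ≤ (α + β) / 2 * d + α := by
  nlinarith

theorem Real.log_six_lt_two : Real.log 6 < 2 := by
  rw [Real.log_lt_iff_lt_exp (by norm_num), show (2 : ℝ) = 1 + 1 by norm_num, Real.exp_add]
  nlinarith [Real.exp_one_gt_d9]

/-- Dwell-time condition verification in Example 2: some `λ > 0` works with `μ = ln 3`. -/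
theorem stmt10 :
    ∃ lam : ℝ, 0 < lam ∧ ∀ s t : ℝ, 0 ≤ s → s ≤ t →
      Real.log 3 * (({n : ℕ | 0 < n ∧ Odd n ∧ (n : ℝ) ∈ Set.Ioc s t}.ncard : ℝ))
      + Real.log 2 * (({n : ℕ | 0 < n ∧ Even n ∧ (n : ℝ) ∈ Set.Ioc s t}.ncard : ℝ))
      - (1 - lam) * (t - s) ≤ Real.log 3 := by
  refine ⟨1 - Real.log 6 / 2, by linarith [Real.log_six_lt_two], fun s t hs hst => ?_⟩
  have ht := hs.trans hst
  rw [ncard_setOf_natCast_mem_Ioc _ hs ht, ncard_setOf_natCast_mem_Ioc _ hs ht]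
  have hcount : ((Finset.card {n ∈ Finset.Ioc ⌊s⌋₊ ⌊t⌋₊ | Odd n} : ℕ) : ℝ)
      + Finset.card {n ∈ Finset.Ioc ⌊s⌋₊ ⌊t⌋₊ | Even n} ≤ t - s + 1 := by
    exact_mod_cast Nat.card_filter_odd_add_card_filter_even_Ioc _ _ ▸
      Nat.cast_floor_sub_floor_le hs hst
  have hweighted := weighted_sum_le_of_le_add_one
    (Real.log_le_log (by norm_num) (by norm_num : (2 : ℝ) ≤ 3))
    (add_nonneg (Real.log_nonneg (by norm_num)) (Real.log_nonneg (by norm_num)))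
    (by exact_mod_cast Nat.card_filter_odd_Ioc_le _ _) hcount
  have hlog6 : Real.log 6 = Real.log 3 + Real.log 2 := by
    rw [show (6 : ℝ) = 3 * 2 by norm_num, Real.log_mul (by norm_num) (by norm_num)]
  rw [hlog6]
  linarith
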